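/- The Chen–Epstein density is a probability density: for every $\alpha\in\mathbb{R}$, $\beta\in\mathbb{R}$, $c\in\mathbb{R}$, the function $f^{\alpha,\beta,c}(y)=\frac{1}{\sqrt{2\pi}}e^{-\frac{(y-\beta)^2-2\alpha(|y-c|-|c-\beta|)+\alpha^2}{2}}-\alpha e^{2\alpha|y-c|}\Phi(-|c-\beta|-|y-c|-\alpha)$ satisfies $\int_{\mathbb{R}} f^{\alpha,\beta,c}(y)\,dy=1$, where $\Phi$ is the standard normal CDF. -/

import Mathlib

/-!
Translating by `c` reduces to `c = 0`, and the reflection `y ↦ -y` turns the half-line `y ≤ 0`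
for `β` into the half-line `y ≥ 0` for `-β`. On `y ≥ 0` the Gaussian part of the density is
`e^{α(β-|β|)} φ(y-β-α)`, and the tilting identity `e^{2αx} φ(x+α) = φ(x-α)` gives
`-α e^{2αy} Φ(-|β|-α-y) = -½ (e^{2αy} Φ(-|β|-α-y))' - ½ e^{-2α|β|} φ(y+|β|-α)`,
so the density has a primitive built from `Φ`. The two half-line integrals for `±β`,
read off from its limits, add up to `1`.
-/

open MeasureTheory

/-- The standard normal cumulative distribution function. -/
noncomputable def stdNormalCDF (x : ℝ) : ℝ :=
  (Real.sqrt (2 * Real.pi))⁻¹ * ∫ y in Set.Iic x, Real.exp (-y ^ 2 / 2)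

/-- The Chen–Epstein density `f^{α,β,c}` arising in the nonlinear CLT with mean
uncertainty. -/
noncomputable def chenEpsteinDensity (α β c y : ℝ) : ℝ :=
  (Real.sqrt (2 * Real.pi))⁻¹ *
      Real.exp (-((y - β) ^ 2 - 2 * α * (|y - c| - |c - β|) + α ^ 2) / 2)
    - α * Real.exp (2 * α * |y - c|) * stdNormalCDF (-|c - β| - |y - c| - α)

open Real Set Filter Topology ProbabilityTheory

noncomputable def stdNormalPDF (x : ℝ) : ℝ := (√(2 * π))⁻¹ * exp (-x ^ 2 / 2)

lemma stdNormalPDF_eq_gaussianPDFReal : stdNormalPDF = gaussianPDFReal 0 1 := by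
  ext x
  simp [stdNormalPDF, gaussianPDFReal]

lemma continuous_stdNormalPDF : Continuous stdNormalPDF := by
  unfold stdNormalPDF; fun_prop

lemma integrable_stdNormalPDF : Integrable stdNormalPDF := by
  rw [stdNormalPDF_eq_gaussianPDFReal]
  exact integrable_gaussianPDFReal 0 1

lemma stdNormalCDF_eq_integral (x : ℝ) : stdNormalCDF x = ∫ t in Iic x, stdNormalPDF t := by
  rw [stdNormalCDF, ← integral_const_mul]
  rfl

lemma stdNormalCDF_eq_cdf : stdNormalCDF = cdf (gaussianReal 0 1) := by
  ext x
  rw [cdf_eq_real, measureReal_def, gaussianReal_apply_eq_integral _ one_ne_zero,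
    ENNReal.toReal_ofReal (integral_nonneg (gaussianPDFReal_nonneg 0 1)),
    stdNormalCDF_eq_integral, stdNormalPDF_eq_gaussianPDFReal]

lemma stdNormalCDF_nonneg (x : ℝ) : 0 ≤ stdNormalCDF x := by
  rw [stdNormalCDF_eq_cdf]
  exact cdf_nonneg _ x

lemma tendsto_stdNormalCDF_atTop : Tendsto stdNormalCDF atTop (𝓝 1) := by
  rw [stdNormalCDF_eq_cdf]
  exact tendsto_cdf_atTop _

lemma hasDerivAt_stdNormalCDF (x : ℝ) : HasDerivAt stdNormalCDF (stdNormalPDF x) x := by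
  have h : stdNormalCDF = fun u => stdNormalCDF 0 + ∫ t in 0..u, stdNormalPDF t := by
    ext u
    rw [stdNormalCDF_eq_integral, stdNormalCDF_eq_integral,
      ← intervalIntegral.integral_Iic_sub_Iic integrable_stdNormalPDF.integrableOn
        integrable_stdNormalPDF.integrableOn]
    ring
  rw [h]
  exact ((continuous_stdNormalPDF.integral_hasStrictDerivAt 0 x).hasDerivAt).const_add _

@[fun_prop]
lemma continuous_stdNormalCDF : Continuous stdNormalCDF :=
  continuous_iff_continuousAt.2 fun x => (hasDerivAt_stdNormalCDF x).continuousAt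

lemma stdNormalCDF_le_exp {a : ℝ} (ha : 0 < a) (x : ℝ) :
    stdNormalCDF x ≤ (√(2 * π))⁻¹ * a⁻¹ * exp (a ^ 2 / 2 + a * x) := by
  have hbound (t : ℝ) : stdNormalPDF t ≤ (√(2 * π))⁻¹ * exp (a ^ 2 / 2) * exp (a * t) := by
    rw [stdNormalPDF, mul_assoc, ← exp_add]
    gcongr
    nlinarith [sq_nonneg (t + a)]
  calc stdNormalCDF x
      ≤ ∫ t in Iic x, (√(2 * π))⁻¹ * exp (a ^ 2 / 2) * exp (a * t) := by
        rw [stdNormalCDF_eq_integral]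
        exact setIntegral_mono integrable_stdNormalPDF.integrableOn
          ((integrableOn_exp_mul_Iic ha x).const_mul _) hbound
    _ = (√(2 * π))⁻¹ * a⁻¹ * exp (a ^ 2 / 2 + a * x) := by
        rw [integral_const_mul, integral_exp_mul_Iic ha, exp_add]
        field_simp

lemma exp_mul_stdNormalCDF_sub_le {a : ℝ} (ha : 0 < a) (k s y : ℝ) :
    exp (k * y) * stdNormalCDF (s - y) ≤
      (√(2 * π))⁻¹ * a⁻¹ * exp (a ^ 2 / 2 + a * s) * exp ((k - a) * y) := by
  have hexp : exp (k * y) * exp (a ^ 2 / 2 + a * (s - y))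
      = exp (a ^ 2 / 2 + a * s) * exp ((k - a) * y) := by
    rw [← exp_add, ← exp_add]
    ring_nf
  calc exp (k * y) * stdNormalCDF (s - y)
      ≤ exp (k * y) * ((√(2 * π))⁻¹ * a⁻¹ * exp (a ^ 2 / 2 + a * (s - y))) := by
        gcongr
        exact stdNormalCDF_le_exp ha _
    _ = _ := by linear_combination (√(2 * π))⁻¹ * a⁻¹ * hexp

lemma integrableOn_exp_mul_stdNormalCDF_sub (k s c : ℝ) :
    IntegrableOn (fun y => exp (k * y) * stdNormalCDF (s - y)) (Ioi c) := by
  have ha : 0 < |k| + 1 := by positivity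
  have hk : k - (|k| + 1) < 0 := by linarith [le_abs_self k]
  refine ((integrableOn_exp_mul_Ioi hk c).const_mul
    ((√(2 * π))⁻¹ * (|k| + 1)⁻¹ * exp ((|k| + 1) ^ 2 / 2 + (|k| + 1) * s))).mono'
    (by fun_prop) (Eventually.of_forall fun y => ?_)
  rw [norm_of_nonneg (mul_nonneg (exp_pos _).le (stdNormalCDF_nonneg _))]
  exact exp_mul_stdNormalCDF_sub_le ha k s y

lemma tendsto_exp_mul_stdNormalCDF_sub (k s : ℝ) :
    Tendsto (fun y => exp (k * y) * stdNormalCDF (s - y)) atTop (𝓝 0) := by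
  have ha : 0 < |k| + 1 := by positivity
  have hk : k - (|k| + 1) < 0 := by linarith [le_abs_self k]
  have hbound : Tendsto (fun y => (√(2 * π))⁻¹ * (|k| + 1)⁻¹ *
      exp ((|k| + 1) ^ 2 / 2 + (|k| + 1) * s) * exp ((k - (|k| + 1)) * y)) atTop (𝓝 0) := by
    simpa using (tendsto_exp_atBot.comp (tendsto_id.const_mul_atTop_of_neg hk)).const_mul _
  exact tendsto_of_tendsto_of_tendsto_of_le_of_le tendsto_const_nhds hbound
    (fun y => mul_nonneg (exp_pos _).le (stdNormalCDF_nonneg _))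
    (exp_mul_stdNormalCDF_sub_le ha k s)

lemma chenEpsteinDensity_add_right (α β c y : ℝ) :
    chenEpsteinDensity α β c (y + c) = chenEpsteinDensity α (β - c) 0 y := by
  simp only [chenEpsteinDensity]
  ring_nf

lemma chenEpsteinDensity_neg (α β y : ℝ) :
    chenEpsteinDensity α β 0 (-y) = chenEpsteinDensity α (-β) 0 y := by
  simp only [chenEpsteinDensity, sub_zero, zero_sub, abs_neg]
  ring_nf

lemma chenEpsteinDensity_of_nonneg (α β : ℝ) {y : ℝ} (hy : 0 ≤ y) :
    chenEpsteinDensity α β 0 y = exp (α * (β - |β|)) * stdNormalPDF (y - (β + α))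
      - α * (exp (2 * α * y) * stdNormalCDF (-|β| - α - y)) := by
  rw [chenEpsteinDensity, stdNormalPDF, sub_zero, zero_sub, abs_neg, abs_of_nonneg hy,
    mul_left_comm, ← exp_add]
  ring_nf

noncomputable def chenEpsteinAntideriv (α β y : ℝ) : ℝ :=
  exp (α * (β - |β|)) * stdNormalCDF (y - (β + α))
    - (exp (2 * α * y) * stdNormalCDF (-|β| - α - y)
      + exp (-(2 * α * |β|)) * stdNormalCDF (y + (|β| - α))) / 2

lemma hasDerivAt_chenEpsteinAntideriv (α β : ℝ) {y : ℝ} (hy : 0 ≤ y) :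
    HasDerivAt (chenEpsteinAntideriv α β) (chenEpsteinDensity α β 0 y) y := by
  have h1 := (hasDerivAt_stdNormalCDF (y - (β + α))).comp_sub_const y (β + α)
  have h2 := (hasDerivAt_stdNormalCDF (-|β| - α - y)).comp_const_sub (-|β| - α) y
  have h3 := (hasDerivAt_stdNormalCDF (y + (|β| - α))).comp_add_const y (|β| - α)
  have h4 := ((hasDerivAt_id y).const_mul (2 * α)).exp
  have htilt : exp (2 * α * y) * stdNormalPDF (-|β| - α - y)
      = exp (-(2 * α * |β|)) * stdNormalPDF (y + (|β| - α)) := by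
    simp only [stdNormalPDF]
    rw [mul_left_comm, ← exp_add, mul_left_comm, ← exp_add]
    ring_nf
  refine ((h1.const_mul (exp (α * (β - |β|)))).sub
    (((h4.mul h2).add (h3.const_mul (exp (-(2 * α * |β|))))).div_const 2)).congr_deriv ?_
  rw [chenEpsteinDensity_of_nonneg α β hy, id]
  linear_combination htilt / 2

lemma tendsto_chenEpsteinAntideriv_atTop (α β : ℝ) :
    Tendsto (chenEpsteinAntideriv α β) atTop
      (𝓝 (exp (α * (β - |β|)) - exp (-(2 * α * |β|)) / 2)) := by
  have h1 :=
    tendsto_stdNormalCDF_atTop.comp (tendsto_atTop_add_const_right _ (-(β + α)) tendsto_id)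
  have h2 := tendsto_exp_mul_stdNormalCDF_sub (2 * α) (-|β| - α)
  have h3 :=
    tendsto_stdNormalCDF_atTop.comp (tendsto_atTop_add_const_right _ (|β| - α) tendsto_id)
  convert (h1.const_mul (exp (α * (β - |β|)))).sub
    ((h2.add (h3.const_mul (exp (-(2 * α * |β|))))).div_const 2) using 2
  · simp [chenEpsteinAntideriv, sub_eq_add_neg]
  · ring

lemma integrableOn_Ioi_chenEpsteinDensity (α β : ℝ) :
    IntegrableOn (chenEpsteinDensity α β 0) (Ioi 0) := by
  refine IntegrableOn.congr_fun ?_ (fun _ hy => (chenEpsteinDensity_of_nonneg α β hy.le).symm)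
    measurableSet_Ioi
  exact ((integrable_stdNormalPDF.comp_sub_right (β + α)).integrableOn.const_mul _).sub
    ((integrableOn_exp_mul_stdNormalCDF_sub (2 * α) (-|β| - α) 0).const_mul α)

lemma integral_Ioi_chenEpsteinDensity (α β : ℝ) :
    ∫ y in Ioi 0, chenEpsteinDensity α β 0 y
      = exp (α * (β - |β|)) - exp (-(2 * α * |β|)) / 2 - chenEpsteinAntideriv α β 0 :=
  integral_Ioi_of_hasDerivAt_of_tendsto' (fun _ hy => hasDerivAt_chenEpsteinAntideriv α β hy)
    (integrableOn_Ioi_chenEpsteinDensity α β) (tendsto_chenEpsteinAntideriv_atTop α β)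

lemma integral_Ioi_chenEpsteinDensity_add_neg (α β : ℝ) :
    (∫ y in Ioi 0, chenEpsteinDensity α β 0 y)
      + ∫ y in Ioi 0, chenEpsteinDensity α (-β) 0 y = 1 := by
  rw [integral_Ioi_chenEpsteinDensity, integral_Ioi_chenEpsteinDensity, chenEpsteinAntideriv,
    chenEpsteinAntideriv, abs_neg]
  rcases abs_cases β with ⟨h, _⟩ | ⟨h, _⟩ <;> rw [h] <;> ring_nf <;> simp

lemma integral_Iic_chenEpsteinDensity (α β : ℝ) :
    ∫ y in Iic 0, chenEpsteinDensity α β 0 y = ∫ y in Ioi 0, chenEpsteinDensity α (-β) 0 y := by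
  have h := integral_comp_neg_Ioi 0 (chenEpsteinDensity α β 0)
  simp only [neg_zero, chenEpsteinDensity_neg] at h
  exact h.symm

lemma integrableOn_Iic_chenEpsteinDensity (α β : ℝ) :
    IntegrableOn (chenEpsteinDensity α β 0) (Iic 0) := by
  have h : IntegrableOn (fun y => chenEpsteinDensity α (-β) 0 (-y)) (Iio 0) :=
    IntegrableOn.comp_neg_Iio (by simpa using integrableOn_Ioi_chenEpsteinDensity α (-β))
  simp only [chenEpsteinDensity_neg, neg_neg] at h
  rwa [integrableOn_Iic_iff_integrableOn_Iio]

/-- The Chen–Epstein density integrates to one. -/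
theorem chenEpsteinDensity_integral_eq_one (α β c : ℝ) :
    ∫ y : ℝ, chenEpsteinDensity α β c y = 1 := by
  have hshift : ∫ y, chenEpsteinDensity α β c y = ∫ y, chenEpsteinDensity α (β - c) 0 y := by
    rw [← integral_add_right_eq_self (chenEpsteinDensity α β c) c]
    simp only [chenEpsteinDensity_add_right]
  rw [hshift, ← intervalIntegral.integral_Iic_add_Ioi (integrableOn_Iic_chenEpsteinDensity α _)
    (integrableOn_Ioi_chenEpsteinDensity α _), integral_Iic_chenEpsteinDensity, add_comm,
    integral_Ioi_chenEpsteinDensity_add_neg]
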